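/- In the setting of Theorem 1 (n ≥ 1 agents, learning rate λ > 0, J : E_θ → E_r → ℝ, J₀ : E_θ → ℝ, θ, S, r given; G(r') := gradient of θ' ↦ J(θ', r') at θ, Agg(r') := (1/n)·(S + θ + λ·G(r')), Φ := J₀ ∘ Agg, g := gradient of r' ↦ J(θ, r') at r nonzero, v := g/‖g‖, G differentiable at r with derivative M, J₀ differentiable at Agg(r), Φ differentiable with L-Lipschitz gradient for L > 0, B := ⟪∇J₀(Agg(r)), M(v)⟫), for every ε ∈ ℝ the poisoned reward r̂ := r − ε·v satisfies the quantitative bound J₀(Agg(r̂)) ≤ J₀(Agg(r)) − ε·(λB/n) + (L/2)·ε². -/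

import Mathlib

/-!
`Φ = J₀ ∘ Agg` has an `L`-Lipschitz gradient, so the descent lemma bounds `Φ (r - ε • v)` by
`Φ r - ε ⟪∇Φ r, v⟫ + (L/2) ε² ‖v‖²`. The map `Agg` is affine in `G`, hence has derivative
`(λ/n) • M` at `r`, and the chain rule identifies `⟪∇Φ r, v⟫` with `λB/n`; finally `‖v‖ = 1`.
-/

open scoped RealInnerProductSpace NNReal

section GradientBounds

variable {E : Type*} [NormedAddCommGroup E] [InnerProductSpace ℝ E]

theorem LipschitzWith.inner_sub_le {F : E → E} {L : ℝ≥0} (hF : LipschitzWith L F)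
    (x h : E) {t : ℝ} (ht : 0 ≤ t) :
    ⟪F (x + t • h) - F x, h⟫ ≤ L * t * ‖h‖ ^ 2 :=
  calc ⟪F (x + t • h) - F x, h⟫ ≤ ‖F (x + t • h) - F x‖ * ‖h‖ := real_inner_le_norm _ _
    _ ≤ L * ‖t • h‖ * ‖h‖ := by
      gcongr
      simpa using hF.norm_sub_le (x + t • h) x
    _ = L * t * ‖h‖ ^ 2 := by rw [norm_smul, Real.norm_of_nonneg ht]; ring

variable [CompleteSpace E]

theorem DifferentiableAt.hasDerivAt_comp_add_smul {f : E → ℝ} {x h : E} {t : ℝ}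
    (hf : DifferentiableAt ℝ f (x + t • h)) :
    HasDerivAt (fun s : ℝ => f (x + s • h)) ⟪gradient f (x + t • h), h⟫ t := by
  have hline : HasDerivAt (fun s : ℝ => x + s • h) h t := by
    simpa using ((hasDerivAt_id t).smul_const h).const_add x
  simpa [Function.comp_def, InnerProductSpace.toDual_apply_apply] using
    (hasGradientAt_iff_hasFDerivAt.mp hf.hasGradientAt).comp_hasDerivAt t hline

theorem apply_add_le_of_lipschitzWith_gradient {f : E → ℝ} {L : ℝ≥0}
    (hf : Differentiable ℝ f) (hL : LipschitzWith L (gradient f)) (x h : E) :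
    f (x + h) ≤ f x + ⟪gradient f x, h⟫ + L / 2 * ‖h‖ ^ 2 := by
  -- `φ t` is the gap between `f` and its quadratic model along the segment: `φ 0 = 0`, `φ` antitone
  set φ : ℝ → ℝ := fun t => f (x + t • h) - t * ⟪gradient f x, h⟫ - L / 2 * t ^ 2 * ‖h‖ ^ 2
  have hφ' : ∀ t, HasDerivAt φ
      (⟪gradient f (x + t • h), h⟫ - ⟪gradient f x, h⟫ - L * t * ‖h‖ ^ 2) t := by
    intro t
    have hquad := ((hasDerivAt_pow 2 t).const_mul ((L : ℝ) / 2)).mul_const (‖h‖ ^ 2)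
    refine ((((hf (x + t • h)).hasDerivAt_comp_add_smul).sub
      ((hasDerivAt_id' t).mul_const ⟪gradient f x, h⟫)).sub hquad).congr_deriv ?_
    simp only [Nat.cast_ofNat, pow_one, Nat.add_one_sub_one, one_mul]
    ring
  have hanti : AntitoneOn φ (Set.Ici 0) := by
    refine antitoneOn_of_hasDerivWithinAt_nonpos (convex_Ici 0)
      (fun t _ => (hφ' t).continuousAt.continuousWithinAt)
      (fun t _ => (hφ' t).hasDerivWithinAt) fun t ht => ?_
    rw [interior_Ici] at ht
    have := hL.inner_sub_le x h (le_of_lt ht)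
    rw [inner_sub_left] at this
    linarith
  have := hanti Set.self_mem_Ici (Set.mem_Ici.mpr zero_le_one) zero_le_one
  simp only [φ, zero_smul, add_zero, one_smul, zero_mul, sub_zero, one_mul, one_pow, ne_eq,
    OfNat.ofNat_ne_zero, not_false_eq_true, zero_pow] at this
  linarith

end GradientBounds

theorem HasFDerivAt.inner_gradient_comp {E F : Type*} [NormedAddCommGroup E]
    [InnerProductSpace ℝ E] [CompleteSpace E] [NormedAddCommGroup F] [InnerProductSpace ℝ F]
    [CompleteSpace F] {g : F → ℝ} {A : E → F} {A' : E →L[ℝ] F} {x : E}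
    (hg : DifferentiableAt ℝ g (A x)) (hA : HasFDerivAt A A' x) (w : E) :
    ⟪gradient (g ∘ A) x, w⟫ = ⟪gradient g (A x), A' w⟫ := by
  rw [inner_gradient_left, inner_gradient_left, fderiv_comp x hg hA.differentiableAt, hA.fderiv]
  rfl

theorem stmt_8_general (dθ dr : ℕ) (n : ℕ) (lam L : ℝ)
    (hL : 0 < L)
    (J₀ : EuclideanSpace ℝ (Fin dθ) → ℝ)
    (θ S : EuclideanSpace ℝ (Fin dθ)) (r : EuclideanSpace ℝ (Fin dr))
    (G : EuclideanSpace ℝ (Fin dr) → EuclideanSpace ℝ (Fin dθ))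
    (Agg : EuclideanSpace ℝ (Fin dr) → EuclideanSpace ℝ (Fin dθ))
    (hAgg : ∀ r', Agg r' = (n : ℝ)⁻¹ • (S + θ + lam • G r'))
    (Φ : EuclideanSpace ℝ (Fin dr) → ℝ) (hΦ : Φ = J₀ ∘ Agg)
    (g : EuclideanSpace ℝ (Fin dr))
    (hg0 : g ≠ 0)
    (v : EuclideanSpace ℝ (Fin dr)) (hv : v = ‖g‖⁻¹ • g)
    (M : EuclideanSpace ℝ (Fin dr) →L[ℝ] EuclideanSpace ℝ (Fin dθ))
    (hM : HasFDerivAt G M r)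
    (hJ₀ : DifferentiableAt ℝ J₀ (Agg r))
    (hΦdiff : Differentiable ℝ Φ)
    (hΦlip : LipschitzWith L.toNNReal (gradient Φ))
    (B : ℝ) (hB : B = ⟪gradient J₀ (Agg r), M v⟫) :
    ∀ ε : ℝ,
      J₀ (Agg (r - ε • v)) ≤ J₀ (Agg r) - ε * (lam * B / n) + (L / 2) * ε ^ 2 := by
  intro ε
  have hAgg' : HasFDerivAt Agg ((n : ℝ)⁻¹ • lam • M) r := by
    rw [funext hAgg]
    exact ((hM.const_smul lam).const_add (S + θ)).const_smul (n : ℝ)⁻¹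
  have hslope : ⟪gradient Φ r, v⟫ = lam * B / n := by
    rw [hΦ, hAgg'.inner_gradient_comp hJ₀, hB]
    simp only [smul_apply, real_inner_smul_right]
    ring
  have hv1 : ‖v‖ = 1 := hv ▸ norm_smul_inv_norm hg0
  have hdescent := apply_add_le_of_lipschitzWith_gradient hΦdiff hΦlip r (-(ε • v))
  rw [← sub_eq_add_neg, inner_neg_right, real_inner_smul_right, hslope, norm_neg, norm_smul,
    hv1, Real.norm_eq_abs, mul_one, sq_abs, Real.coe_toNNReal L hL.le, hΦ] at hdescent
  simp only [Function.comp_apply] at hdescent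
  linarith

/-- The quantitative bound (Eq. (lip')) from the proof of Theorem 1: for every
attack budget `ε`, the poisoned global objective satisfies
`J₀(Agg(r - ε•v)) ≤ J₀(Agg r) - ε·(λB/n) + (L/2)·ε²`. -/
theorem stmt_8 (dθ dr : ℕ) (n : ℕ) (hn : 1 ≤ n) (lam L : ℝ)
    (hlam : 0 < lam) (hL : 0 < L)
    (J : EuclideanSpace ℝ (Fin dθ) → EuclideanSpace ℝ (Fin dr) → ℝ)
    (J₀ : EuclideanSpace ℝ (Fin dθ) → ℝ)
    (θ S : EuclideanSpace ℝ (Fin dθ)) (r : EuclideanSpace ℝ (Fin dr))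
    (G : EuclideanSpace ℝ (Fin dr) → EuclideanSpace ℝ (Fin dθ))
    (hG : ∀ r', G r' = gradient (fun θ' => J θ' r') θ)
    (Agg : EuclideanSpace ℝ (Fin dr) → EuclideanSpace ℝ (Fin dθ))
    (hAgg : ∀ r', Agg r' = (n : ℝ)⁻¹ • (S + θ + lam • G r'))
    (Φ : EuclideanSpace ℝ (Fin dr) → ℝ) (hΦ : Φ = J₀ ∘ Agg)
    (g : EuclideanSpace ℝ (Fin dr))
    (hg : g = gradient (fun r' => J θ r') r) (hg0 : g ≠ 0)
    (v : EuclideanSpace ℝ (Fin dr)) (hv : v = ‖g‖⁻¹ • g)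
    (M : EuclideanSpace ℝ (Fin dr) →L[ℝ] EuclideanSpace ℝ (Fin dθ))
    (hM : HasFDerivAt G M r)
    (hJ₀ : DifferentiableAt ℝ J₀ (Agg r))
    (hΦdiff : Differentiable ℝ Φ)
    (hΦlip : LipschitzWith L.toNNReal (gradient Φ))
    (B : ℝ) (hB : B = ⟪gradient J₀ (Agg r), M v⟫) :
    ∀ ε : ℝ,
      J₀ (Agg (r - ε • v)) ≤ J₀ (Agg r) - ε * (lam * B / n) + (L / 2) * ε ^ 2 :=
  stmt_8_general dθ dr n lam L hL J₀ θ S r G Agg hAgg Φ hΦ g hg0 v hv M hM hJ₀ hΦdiff hΦlip B hB
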